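/- Let (T_i, 𝒯_i), i = 1,…,n, and (S, 𝒮) be measurable spaces whose σ-algebras are universal completions of countably generated σ-algebras, let (η_1,…,η_n) be a belief map profile consistent under a common prior p on S × T, and let ν = ν_0 ⊗ ν_1 ⊗ ⋯ ⊗ ν_n be a product probability measure with p ≪ ν. Then for each i there exists a probability kernel η̃_i from T_i to S × T_{-i} such that η̃_i(t_i, ·) ≪ ν_0 ⊗ ν_{-i} for every t_i ∈ T_i, and η̃_i agrees with η_i for (p ∘ π_i^{-1})-almost every t_i. -/

import Mathlib

open MeasureTheory ProbabilityTheory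
open scoped MeasureTheory ENNReal

/-!
Let `f` be the density of the joint law `(p ∘ π_i⁻¹) ⊗ η_i` with respect to
`ν_i ⊗ (ν₀ ⊗ ν_{-i})`. Normalizing the sections `f (t, ·)` gives a kernel that is dominated by
`ν₀ ⊗ ν_{-i}` at every type and has the same joint law as `η_i`. Kernels with the same joint law
agree a.e. on a countably generated σ-algebra, and a probability measure on a σ-algebra lying
between a σ-algebra and its universal completion is determined by its values on the smaller one.
-/

noncomputable def completionAlg {X : Type*} (m : MeasurableSpace X) (μ : @Measure X m) :
    MeasurableSpace X where
  MeasurableSet' s := @NullMeasurableSet X m s μ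
  measurableSet_empty := @MeasurableSet.nullMeasurableSet X m μ ∅ MeasurableSet.empty
  measurableSet_compl _ hs := @NullMeasurableSet.compl X m μ _ hs
  measurableSet_iUnion _ hs := @NullMeasurableSet.iUnion X m μ _ _ _ hs

noncomputable def univCompletion {X : Type*} (m : MeasurableSpace X) : MeasurableSpace X :=
  ⨅ (μ : @Measure X m) (_ : @IsProbabilityMeasure X m μ), completionAlg m μ

section UnivCompletion

variable {X Y : Type*}

lemma MeasurableSpace.prod_mono {m₁ m₂ : MeasurableSpace X} {m₃ m₄ : MeasurableSpace Y}
    (h₁ : m₁ ≤ m₂) (h₂ : m₃ ≤ m₄) : m₁.prod m₃ ≤ m₂.prod m₄ :=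
  sup_le_sup (comap_mono h₁) (comap_mono h₂)

lemma MeasurableSpace.pi_mono {ι : Type*} {Z : ι → Type*} {m m' : ∀ i, MeasurableSpace (Z i)}
    (h : ∀ i, m i ≤ m' i) : @MeasurableSpace.pi ι Z m ≤ @MeasurableSpace.pi ι Z m' :=
  iSup_mono fun i => comap_mono (h i)

lemma le_univCompletion (m : MeasurableSpace X) : m ≤ univCompletion m :=
  le_iInf fun μ => le_iInf fun _ _ hs => @MeasurableSet.nullMeasurableSet X m μ _ hs

lemma measurableSet_univCompletion_iff {m : MeasurableSpace X} {s : Set X} :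
    MeasurableSet[univCompletion m] s ↔
      ∀ μ : @Measure X m, @IsProbabilityMeasure X m μ → @NullMeasurableSet X m s μ := by
  unfold univCompletion
  simp only [MeasurableSpace.measurableSet_iInf]
  rfl

lemma Measurable.univCompletion {m₀X : MeasurableSpace X} {m₀Y : MeasurableSpace Y} {g : X → Y}
    (hg : Measurable[m₀X, m₀Y] g) :
    Measurable[univCompletion m₀X, univCompletion m₀Y] g := by
  intro s hs
  rw [measurableSet_univCompletion_iff] at hs ⊢
  intro μ hμ
  have := @Measure.isProbabilityMeasure_map X Y m₀X m₀Y μ hμ g hg.aemeasurable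
  obtain ⟨t, -, ht, hst⟩ := (hs _ this).exists_measurable_superset_ae_eq
  exact (hg ht).nullMeasurableSet.congr ((hg.quasiMeasurePreserving μ).preimage_ae_eq hst)

lemma prod_le_univCompletion {m₀X mX : MeasurableSpace X} {m₀Y mY : MeasurableSpace Y}
    (hX : mX ≤ univCompletion m₀X) (hY : mY ≤ univCompletion m₀Y) :
    mX.prod mY ≤ univCompletion (m₀X.prod m₀Y) :=
  sup_le ((MeasurableSpace.comap_mono hX).trans
      (@measurable_fst _ _ m₀X m₀Y).univCompletion.comap_le)
    ((MeasurableSpace.comap_mono hY).trans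
      (@measurable_snd _ _ m₀X m₀Y).univCompletion.comap_le)

lemma pi_le_univCompletion {ι : Type*} {Z : ι → Type*} {m₀ m : ∀ i, MeasurableSpace (Z i)}
    (h : ∀ i, m i ≤ univCompletion (m₀ i)) :
    @MeasurableSpace.pi ι Z m ≤ univCompletion (@MeasurableSpace.pi ι Z m₀) :=
  iSup_le fun i => (MeasurableSpace.comap_mono (h i)).trans
    (@measurable_pi_apply ι Z m₀ i).univCompletion.comap_le

/-- Both trimmed measures are dominated by the probability measure `(μ + ν) / 2` on `m₀`. -/
lemma MeasureTheory.Measure.ext_of_trim_eq_of_le_univCompletion {m₀ m : MeasurableSpace X}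
    (h₀ : m₀ ≤ m) (hm : m ≤ univCompletion m₀) {μ ν : Measure X}
    [IsProbabilityMeasure μ] [IsProbabilityMeasure ν] (h : μ.trim h₀ = ν.trim h₀) : μ = ν := by
  set ρ : @Measure X m₀ := (2 : ℝ≥0∞)⁻¹ • (μ.trim h₀ + ν.trim h₀)
  have hρ : @IsProbabilityMeasure X m₀ ρ := ⟨by
    simp [ρ, trim_measurableSet_eq h₀ MeasurableSet.univ, ENNReal.inv_two_add_inv_two]⟩
  have hμρ : μ.trim h₀ ≪ ρ :=
    ((Measure.AbsolutelyContinuous.refl _).add_right _).trans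
      (Measure.absolutelyContinuous_smul (by norm_num))
  have hνρ : ν.trim h₀ ≪ ρ :=
    ((Measure.AbsolutelyContinuous.refl _).add_right' _).trans
      (Measure.absolutelyContinuous_smul (by norm_num))
  ext s hs
  obtain ⟨t, -, ht, hst⟩ :=
    (measurableSet_univCompletion_iff.mp (hm s hs) ρ hρ).exists_measurable_superset_ae_eq
  calc μ s = μ t := measure_congr (ae_eq_of_ae_eq_trim (hμρ.ae_eq hst)).symm
    _ = ν t := by rw [← trim_measurableSet_eq h₀ ht, h, trim_measurableSet_eq h₀ ht]
    _ = ν s := measure_congr (ae_eq_of_ae_eq_trim (hνρ.ae_eq hst))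

end UnivCompletion

lemma MeasurableSpace.CountablyGenerated.iSup {X ι : Type*} [Countable ι]
    {m : ι → MeasurableSpace X} (h : ∀ i, @MeasurableSpace.CountablyGenerated X (m i)) :
    @MeasurableSpace.CountablyGenerated X (⨆ i, m i) := by
  choose b hb hgen using fun i => (h i).isCountablyGenerated
  exact @MeasurableSpace.CountablyGenerated.mk X (⨆ i, m i) ⟨⋃ i, b i, Set.countable_iUnion hb,
    by rw [iSup_congr hgen, MeasurableSpace.iSup_generateFrom]⟩

instance MeasurableSpace.CountablyGenerated.pi {ι : Type*} [Countable ι] {Z : ι → Type*}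
    [∀ i, MeasurableSpace (Z i)] [∀ i, MeasurableSpace.CountablyGenerated (Z i)] :
    MeasurableSpace.CountablyGenerated (∀ i, Z i) :=
  .iSup fun i => .comap fun z : ∀ i, Z i => z i

lemma ProbabilityTheory.Kernel.ae_eq_of_compProd_eq_of_le_univCompletion {X Y : Type*}
    {mX : MeasurableSpace X} {m₀ mY : MeasurableSpace Y}
    [@MeasurableSpace.CountablyGenerated Y m₀] (h₀ : m₀ ≤ mY) (hm : mY ≤ univCompletion m₀)
    {μ : Measure X} [IsFiniteMeasure μ] {κ η : Kernel X Y} [IsMarkovKernel κ] [IsMarkovKernel η]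
    (h : μ ⊗ₘ κ = μ ⊗ₘ η) : κ =ᵐ[μ] η := by
  have hid : Measurable[mY, m₀] id := measurable_id'' h₀
  have hmap : μ ⊗ₘ @Kernel.map _ _ _ _ _ m₀ κ id = μ ⊗ₘ @Kernel.map _ _ _ _ _ m₀ η id := by
    rw [Measure.compProd_map hid, Measure.compProd_map hid, h]
  filter_upwards [Kernel.ae_eq_of_compProd_eq hmap] with t ht
  refine Measure.ext_of_trim_eq_of_le_univCompletion h₀ hm ?_
  rwa [trim_eq_map, trim_eq_map, ← Kernel.map_apply _ hid, ← Kernel.map_apply _ hid]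

section DensityKernel

variable {X Y : Type*} [MeasurableSpace X] [MeasurableSpace Y]
  {α : Measure X} {β : Measure Y} {f : X × Y → ℝ≥0∞}

lemma MeasureTheory.Measure.fst_withDensity_prod [SFinite α] [SFinite β] (hf : Measurable f) :
    ((α.prod β).withDensity f).fst = α.withDensity fun t => ∫⁻ y, f (t, y) ∂β := by
  ext A hA
  rw [Measure.fst_apply hA, ← Set.prod_univ, withDensity_apply _ (hA.prod MeasurableSet.univ),
    ← Measure.prod_restrict, lintegral_prod _ hf.aemeasurable, withDensity_apply _ hA]
  simp only [Measure.restrict_univ]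

/-- Where the mass of `f (t, ·)` is `0` or `∞` the constant density `1` is used, so that
`densityKernel β f` is Markov. -/
noncomputable def normalizedSection (β : Measure Y) (f : X × Y → ℝ≥0∞) (t : X) (y : Y) :
    ℝ≥0∞ :=
  if ∫⁻ y, f (t, y) ∂β = 0 ∨ ∫⁻ y, f (t, y) ∂β = ∞ then 1 else (∫⁻ y, f (t, y) ∂β)⁻¹ * f (t, y)

lemma measurable_normalizedSection [SFinite β] (hf : Measurable f) :
    Measurable (Function.uncurry (normalizedSection β f)) := by
  have hmass : Measurable fun t => ∫⁻ y, f (t, y) ∂β := hf.lintegral_prod_right'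
  refine Measurable.ite ?_ measurable_const ((hmass.comp measurable_fst).inv.mul hf)
  exact measurable_fst (((measurableSet_singleton 0).preimage hmass).union
    ((measurableSet_singleton ∞).preimage hmass))

noncomputable def densityKernel (β : Measure Y) [SFinite β] (f : X × Y → ℝ≥0∞) : Kernel X Y :=
  (Kernel.const X β).withDensity (normalizedSection β f)

lemma densityKernel_apply [SFinite β] (hf : Measurable f) (t : X) :
    densityKernel β f t = β.withDensity (normalizedSection β f t) := by
  rw [densityKernel, Kernel.withDensity_apply _ (measurable_normalizedSection hf),
    Kernel.const_apply]

lemma densityKernel_absolutelyContinuous [SFinite β] (t : X) : densityKernel β f t ≪ β :=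
  Kernel.withDensity_absolutelyContinuous (κ := Kernel.const X β) _ t

lemma isMarkovKernel_densityKernel [IsProbabilityMeasure β] (hf : Measurable f) :
    IsMarkovKernel (densityKernel β f) := by
  refine ⟨fun t => ⟨?_⟩⟩
  rw [densityKernel_apply hf, withDensity_apply _ MeasurableSet.univ, Measure.restrict_univ]
  by_cases ht : ∫⁻ y, f (t, y) ∂β = 0 ∨ ∫⁻ y, f (t, y) ∂β = ∞
  · simp [normalizedSection, ht]
  · push Not at ht
    simp only [normalizedSection, ht, or_self, if_false]
    have hft : Measurable fun y => f (t, y) := hf.comp measurable_prodMk_left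
    rw [lintegral_const_mul _ hft, ENNReal.inv_mul_cancel ht.1 ht.2]

lemma mass_smul_densityKernel [SFinite β] (hf : Measurable f) {t : X}
    (ht : ∫⁻ y, f (t, y) ∂β ≠ ∞) :
    (∫⁻ y, f (t, y) ∂β) • densityKernel β f t = β.withDensity fun y => f (t, y) := by
  by_cases h0 : ∫⁻ y, f (t, y) ∂β = 0
  · have : (fun y => f (t, y)) =ᵐ[β] 0 :=
      (lintegral_eq_zero_iff (hf.comp measurable_prodMk_left)).mp h0
    rw [h0, zero_smul, withDensity_congr_ae this, withDensity_zero]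
  · rw [densityKernel_apply hf, ← withDensity_smul' _ _ ht]
    congr 1
    funext y
    simp only [normalizedSection, h0, ht, or_self, if_false, Pi.smul_apply, smul_eq_mul,
      ← mul_assoc, ENNReal.mul_inv_cancel h0 ht, one_mul]

lemma withDensity_compProd_densityKernel [SFinite α] [IsProbabilityMeasure β] (hf : Measurable f)
    (hfin : ∀ᵐ t ∂α, ∫⁻ y, f (t, y) ∂β ≠ ∞) :
    α.withDensity (fun t => ∫⁻ y, f (t, y) ∂β) ⊗ₘ densityKernel β f = (α.prod β).withDensity f := by
  have := isMarkovKernel_densityKernel (β := β) hf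
  ext s hs
  rw [Measure.compProd_apply hs, lintegral_withDensity_eq_lintegral_mul _
      hf.lintegral_prod_right' (Kernel.measurable_kernel_prodMk_left hs),
    withDensity_apply _ hs, ← lintegral_indicator hs,
    lintegral_prod _ (hf.indicator hs).aemeasurable]
  refine lintegral_congr_ae ?_
  filter_upwards [hfin] with t ht
  rw [Pi.mul_apply, ← smul_eq_mul, ← Measure.smul_apply, mass_smul_densityKernel hf ht,
    withDensity_apply _ (measurable_prodMk_left hs),
    ← lintegral_indicator (measurable_prodMk_left hs)]
  rfl

end DensityKernel

/-- The density kernel of `μ ⊗ₘ κ` with respect to `α.prod β` is a version of `κ`. -/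
theorem ProbabilityTheory.Kernel.exists_dominated_ae_eq {X Y : Type*} {mX : MeasurableSpace X}
    {m₀ mY : MeasurableSpace Y} [@MeasurableSpace.CountablyGenerated Y m₀] (h₀ : m₀ ≤ mY)
    (hm : mY ≤ univCompletion m₀) {α : Measure X} [SigmaFinite α] {β : Measure Y}
    [IsProbabilityMeasure β] {μ : Measure X} [IsFiniteMeasure μ] (κ : Kernel X Y)
    [IsMarkovKernel κ] (hac : μ ⊗ₘ κ ≪ α.prod β) :
    ∃ κ' : Kernel X Y, IsMarkovKernel κ' ∧ (∀ t, κ' t ≪ β) ∧ κ' =ᵐ[μ] κ := by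
  set f := (μ ⊗ₘ κ).rnDeriv (α.prod β)
  have hf : Measurable f := Measure.measurable_rnDeriv _ _
  have hQ : (α.prod β).withDensity f = μ ⊗ₘ κ := Measure.withDensity_rnDeriv_eq _ _ hac
  have hμ : μ = α.withDensity fun t => ∫⁻ y, f (t, y) ∂β := by
    rw [← Measure.fst_withDensity_prod hf, hQ, Measure.fst_compProd]
  have hfin : ∀ᵐ t ∂α, ∫⁻ y, f (t, y) ∂β ≠ ∞ := by
    refine (ae_lt_top hf.lintegral_prod_right' ?_).mono fun _ => ne_of_lt
    rw [← setLIntegral_univ, ← withDensity_apply _ .univ, ← hμ]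
    exact measure_ne_top _ _
  have hκ' := isMarkovKernel_densityKernel (β := β) hf
  refine ⟨densityKernel β f, hκ', densityKernel_absolutelyContinuous,
    Kernel.ae_eq_of_compProd_eq_of_le_univCompletion h₀ hm ?_⟩
  calc μ ⊗ₘ densityKernel β f
      = (α.withDensity fun t => ∫⁻ y, f (t, y) ∂β) ⊗ₘ densityKernel β f := by rw [← hμ]
    _ = (α.prod β).withDensity f := withDensity_compProd_densityKernel hf hfin
    _ = μ ⊗ₘ κ := hQ

lemma measurePreserving_prod_pi_split {ι : Type*} [Fintype ι] [DecidableEq ι] {S : Type*}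
    [MeasurableSpace S] {T : ι → Type*} [∀ j, MeasurableSpace (T j)] (ν0 : Measure S) [SigmaFinite ν0]
    (ν : ∀ j, Measure (T j)) [∀ j, SigmaFinite (ν j)] (i : ι) :
    MeasurePreserving (fun x : S × (∀ j, T j) => (x.2 i, (x.1, fun j : {j // j ≠ i} => x.2 j)))
      (ν0.prod (Measure.pi ν)) ((ν i).prod (ν0.prod (Measure.pi fun j : {j // j ≠ i} => ν j))) := by
  let : Unique {j // ¬j ≠ i} := ⟨⟨⟨i, by simp⟩⟩, fun j => Subtype.ext (not_ne_iff.mp j.2)⟩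
  have hsplit := (MeasurePreserving.id ν0).prod
    (measurePreserving_piEquivPiSubtypeProd ν fun j => j ≠ i)
  have hunique := (MeasurePreserving.id ν0).prod ((MeasurePreserving.id
    (Measure.pi fun j : {j // j ≠ i} => ν j)).prod
      (measurePreserving_piUnique fun j : {j // ¬j ≠ i} => ν j))
  have hassoc := (measurePreserving_prodAssoc ν0 (Measure.pi fun j : {j // j ≠ i} => ν j)
    (ν i)).symm MeasurableEquiv.prodAssoc
  exact ((Measure.measurePreserving_swap.comp hassoc).comp hunique).comp hsplit

/-- Proposition 2.1(ii): if the σ-algebras are universal completions of countably generated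
σ-algebras, the belief profile `η` is consistent under a common prior `p`, and `p ≪ ν` for a
product probability measure `ν`, then each belief map has a version `η̃_i` that is dominated
by `ν₀ ⊗ ν_{-i}` at *every* type and agrees with `η_i` for `(p ∘ π_i⁻¹)`-a.e. type. -/
theorem exists_dominated_version_of_beliefs
    {n : ℕ} {S : Type*} [mS : MeasurableSpace S]
    {T : Fin n → Type*} [mT : ∀ j, MeasurableSpace (T j)]
    (hS : ∃ m₀ : MeasurableSpace S, @MeasurableSpace.CountablyGenerated S m₀ ∧
      mS = univCompletion m₀)
    (hT : ∀ j, ∃ m₀ : MeasurableSpace (T j), @MeasurableSpace.CountablyGenerated (T j) m₀ ∧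
      mT j = univCompletion m₀)
    (η : ∀ i : Fin n, Kernel (T i) (S × (∀ j : {j : Fin n // j ≠ i}, T j)))
    [∀ i, IsMarkovKernel (η i)]
    (p : Measure (S × (∀ j, T j))) [IsProbabilityMeasure p]
    (hcons : ∀ i : Fin n,
      p.map (fun x : S × (∀ j, T j) => (x.2 i, (x.1, fun j : {j : Fin n // j ≠ i} => x.2 j)))
        = (p.map (fun x : S × (∀ j, T j) => x.2 i)) ⊗ₘ η i)
    (ν0 : Measure S) [IsProbabilityMeasure ν0]
    (ν : ∀ j, Measure (T j)) [∀ j, IsProbabilityMeasure (ν j)]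
    (hac : p ≪ ν0.prod (Measure.pi ν)) :
    ∀ i : Fin n, ∃ ηt : Kernel (T i) (S × (∀ j : {j : Fin n // j ≠ i}, T j)),
      IsMarkovKernel ηt ∧
      (∀ t : T i, ηt t ≪ ν0.prod (Measure.pi (fun j : {j : Fin n // j ≠ i} => ν j))) ∧
      (∀ᵐ t ∂(p.map (fun x : S × (∀ j, T j) => x.2 i)), ηt t = η i t) := by
  intro i
  have hπ : Measurable fun x : S × (∀ j, T j) => x.2 i := by fun_prop
  have := Measure.isProbabilityMeasure_map (μ := p) hπ.aemeasurable
  have hsplit := measurePreserving_prod_pi_split ν0 ν i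
  have hac' : (p.map fun x : S × (∀ j, T j) => x.2 i) ⊗ₘ η i ≪
      (ν i).prod (ν0.prod (Measure.pi fun j : {j : Fin n // j ≠ i} => ν j)) := by
    rw [← hcons i, ← hsplit.map_eq]
    exact hac.map hsplit.measurable
  -- destructured only now: `m₀S` and `m₀T` become local instances and would shadow `mS`, `mT`
  obtain ⟨m₀S, hcgS, hmS⟩ := hS
  choose m₀T hcgT hmT using hT
  exact Kernel.exists_dominated_ae_eq
    (m₀ := m₀S.prod (@MeasurableSpace.pi _ _ fun j : {j : Fin n // j ≠ i} => m₀T j))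
    (MeasurableSpace.prod_mono ((le_univCompletion _).trans_eq hmS.symm)
      (MeasurableSpace.pi_mono fun j => (le_univCompletion _).trans_eq (hmT j).symm))
    (prod_le_univCompletion hmS.le (pi_le_univCompletion fun j => (hmT j).le)) (η i) hac'
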